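/- arXiv:1806.08031 — 2 statements merged into one kernel-verified Lean document; each statement's English description precedes it below -/
import Mathlib

section
/- If Z_1, ..., Z_n are i.i.d. standard normal random variables (n ≥ 2), Z̄ = (∑ Z_i)/n, and W = ∑_{i=1}^n (Z_i − Z̄)², then Z̄ and W are independent random variables. -/
open MeasureTheory ProbabilityTheory

/-!
The vector `(Zᵢ)` is Gaussian, hence so is its linear image `(Z̄, (Zᵢ - Z̄)ᵢ)`. For jointly
Gaussian variables zero covariance means independence, and
`Cov(Z̄, Zᵢ - Z̄) = σ²/n - σ²/n = 0` for any uncorrelated family of common variance `σ²`.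
So `Z̄` is independent of the vector of deviations, of which `W` is a function.
-/

namespace ProbabilityTheory

variable {Ω : Type*} {mΩ : MeasurableSpace Ω} {P : Measure Ω}

lemma covariance_mean_sub_mean_eq_zero [IsFiniteMeasure P] {ι : Type*} [Fintype ι]
    {X : ι → Ω → ℝ} {v : ℝ} (hX : ∀ i, MemLp (X i) 2 P) (hvar : ∀ i, cov[X i, X i; P] = v)
    (hcov : Pairwise fun i j ↦ cov[X i, X j; P] = 0) (i : ι) :
    cov[fun ω ↦ (∑ j, X j ω) / Fintype.card ι,
      fun ω ↦ X i ω - (∑ j, X j ω) / Fintype.card ι; P] = 0 := by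
  have hS : MemLp (fun ω ↦ ∑ j, X j ω) 2 P := memLp_finsetSum _ fun j _ ↦ hX j
  have hSX (k : ι) : cov[fun ω ↦ ∑ j, X j ω, X k; P] = v := by
    rw [covariance_fun_sum_left hX (hX k), Finset.sum_eq_single k (fun j _ hjk ↦ hcov hjk)
      (by simp), hvar]
  have hSS : cov[fun ω ↦ ∑ j, X j ω, fun ω ↦ ∑ j, X j ω; P] = Fintype.card ι * v := by
    simp [covariance_fun_sum_right hX hS, hSX]
  have hmean : MemLp (fun ω ↦ (∑ j, X j ω) / Fintype.card ι) 2 P := by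
    simpa only [div_eq_mul_inv] using hS.mul_const (Fintype.card ι : ℝ)⁻¹
  have : Nonempty ι := ⟨i⟩
  rw [covariance_fun_sub_right hmean (hX i) hmean, covariance_fun_div_left,
    covariance_fun_div_left, covariance_fun_div_right, hSX, hSS]
  field_simp
  ring

lemma HasGaussianLaw.indepFun_pi_of_covariance_eq_zero {ι : Type*} [Fintype ι] {Y : Ω → ℝ}
    {X : ι → Ω → ℝ} (hYX : HasGaussianLaw (fun ω ↦ (Y ω, fun j ↦ X j ω)) P)
    (h : ∀ j, cov[Y, X j; P] = 0) :
    IndepFun Y (fun ω j ↦ X j ω) P := by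
  let A : ℝ × (ι → ℝ) →L[ℝ] (Unit → ℝ) × (ι → ℝ) :=
    (ContinuousLinearMap.pi fun _ ↦ .fst ℝ ℝ (ι → ℝ)).prod (.snd ℝ ℝ (ι → ℝ))
  have hindep := HasGaussianLaw.indepFun_of_covariance_eval (X := fun _ : Unit ↦ Y) (Y := X)
    (hYX.map_fun A) fun _ j ↦ h j
  exact hindep.comp (measurable_pi_apply ()) measurable_id

theorem HasGaussianLaw.indepFun_mean_deviations {ι : Type*} [Fintype ι] {X : ι → Ω → ℝ}
    (hX : HasGaussianLaw (fun ω i ↦ X i ω) P) {v : ℝ} (hvar : ∀ i, cov[X i, X i; P] = v)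
    (hcov : Pairwise fun i j ↦ cov[X i, X j; P] = 0) :
    IndepFun (fun ω ↦ (∑ j, X j ω) / Fintype.card ι)
      (fun ω i ↦ X i ω - (∑ j, X j ω) / Fintype.card ι) P := by
  have := hX.isProbabilityMeasure
  let A : (ι → ℝ) →ₗ[ℝ] ℝ × (ι → ℝ) :=
    { toFun x := ((∑ j, x j) / Fintype.card ι, fun i ↦ x i - (∑ j, x j) / Fintype.card ι)
      map_add' x y := by ext <;> simp [Finset.sum_add_distrib] <;> ring
      map_smul' c x := by ext <;> simp [← Finset.mul_sum] <;> ring }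
  exact (hX.map_fun A.toContinuousLinearMap).indepFun_pi_of_covariance_eq_zero
    (covariance_mean_sub_mean_eq_zero (fun i ↦ (hX.eval i).memLp_two) hvar hcov)

end ProbabilityTheory

theorem mean_indep_sum_sq_dev_general {Ω : Type*} [MeasureSpace Ω] (P : Measure Ω)
    (n : ℕ) (Z : Fin n → Ω → ℝ)
    (hmeas : ∀ i, Measurable (Z i))
    (hindep : iIndepFun Z P)
    (hlaw : ∀ i, P.map (Z i) = gaussianReal 0 1) :
    IndepFun (fun ω => (∑ i, Z i ω) / n)
      (fun ω => ∑ i, (Z i ω - (∑ j, Z j ω) / n) ^ 2) P := by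
  have hZ (i : Fin n) : HasLaw (Z i) (gaussianReal 0 1) P := ⟨(hmeas i).aemeasurable, hlaw i⟩
  have hL2 (i : Fin n) : MemLp (Z i) 2 P := (hZ i).hasGaussianLaw.memLp_two
  have hvar (i : Fin n) : cov[Z i, Z i; P] = 1 := by
    rw [covariance_self (hmeas i).aemeasurable, (hZ i).variance_eq, variance_id_gaussianReal,
      NNReal.coe_one]
  have hmean_dev := (hindep.hasGaussianLaw fun i ↦ (hZ i).hasGaussianLaw).indepFun_mean_deviations
    hvar fun i j hij ↦ (hindep.indepFun hij).covariance_eq_zero (hL2 i) (hL2 j)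
  simpa [Function.comp_def] using hmean_dev.comp measurable_id
    (Finset.measurable_sum Finset.univ fun i _ ↦ (measurable_pi_apply i).pow_const 2)

/-- For i.i.d. standard normals, the sample mean `Z̄` and the sum of squared
deviations `W = ∑ (Zᵢ - Z̄)²` are independent. -/
theorem mean_indep_sum_sq_dev {Ω : Type*} [MeasureSpace Ω] (P : Measure Ω) [IsProbabilityMeasure P]
    (n : ℕ) (hn : 2 ≤ n) (Z : Fin n → Ω → ℝ)
    (hmeas : ∀ i, Measurable (Z i))
    (hindep : iIndepFun Z P)
    (hlaw : ∀ i, P.map (Z i) = gaussianReal 0 1) :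
    IndepFun (fun ω => (∑ i, Z i ω) / n)
      (fun ω => ∑ i, (Z i ω - (∑ j, Z j ω) / n) ^ 2) P :=
  mean_indep_sum_sq_dev_general P n Z hmeas hindep hlaw
end

section
/- The sum of squares of k independent standard normal random variables has the Gamma distribution with shape parameter k/2 and rate 1/2 (the chi-squared distribution with k degrees of freedom). -/
/-!
The square of a standard normal variable has law `Gamma(1/2, 1/2)`: by symmetry of the Gaussian
density, the substitution `y = x²` on `(0, ∞)` turns `2 φ(x) dx` into the `Gamma(1/2, 1/2)` density.
Gamma laws with a common rate are stable under convolution, since after the substitution `x = z t`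
the convolution integral of the densities at `z > 0` factors into the `Gamma(a + b, r)` density at
`z` times the integral of the `Beta(a, b)` density. Induction over the independent summands then
gives `Gamma(k/2, 1/2)`.
-/

open MeasureTheory ProbabilityTheory Set Real
open scoped ENNReal NNReal

theorem Function.Even.lintegral_eq_two_mul_setLIntegral_Ioi {f : ℝ → ℝ≥0∞} (hf : f.Even) :
    ∫⁻ x, f x = 2 * ∫⁻ x in Ioi 0, f x := by
  have hneg : ∫⁻ x in Iio 0, f x = ∫⁻ x in Ioi 0, f x := by
    simpa [hf _] using lintegral_image_eq_lintegral_abs_deriv_mul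
      (measurableSet_Ioi (a := (0 : ℝ))) (fun x _ => (hasDerivAt_neg x).hasDerivWithinAt)
      neg_injective.injOn f
  rw [← lintegral_add_compl f measurableSet_Ici, compl_Ici, hneg,
    Measure.restrict_congr_set Ioi_ae_eq_Ici.symm, two_mul, add_comm]

namespace ProbabilityTheory

@[fun_prop]
lemma measurable_gammaPDF (a r : ℝ) : Measurable (gammaPDF a r) :=
  (measurable_gammaPDFReal a r).ennreal_ofReal

section GammaConvolution

variable {a b r : ℝ}

lemma mul_gammaPDFReal_mul_gammaPDFReal (ha : 0 < a) (hb : 0 < b) (hr : 0 < r) {z t : ℝ}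
    (hz : 0 < z) (ht₀ : 0 < t) (ht₁ : t < 1) :
    z * (gammaPDFReal a r (z * t) * gammaPDFReal b r (z * (1 - t))) =
      gammaPDFReal (a + b) r z * betaPDFReal a b t := by
  have ht₁' : 0 < 1 - t := sub_pos.2 ht₁
  rw [gammaPDFReal, gammaPDFReal, gammaPDFReal, betaPDFReal, if_pos (by positivity),
    if_pos (by positivity), if_pos hz.le, if_pos ⟨ht₀, ht₁⟩, beta, mul_rpow hz.le ht₀.le,
    mul_rpow hz.le ht₁'.le, rpow_add hr]
  have hz' : z ^ (a + b - 1) = z * z ^ (a - 1) * z ^ (b - 1) := by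
    rw [← rpow_one_add' hz.le (by linarith), ← rpow_add hz]
    ring_nf
  have hexp : exp (-(r * (z * t))) * exp (-(r * (z * (1 - t)))) = exp (-(r * z)) := by
    rw [← exp_add]
    ring_nf
  have hΓa := Gamma_pos_of_pos ha
  have hΓb := Gamma_pos_of_pos hb
  have hΓab := Gamma_pos_of_pos (add_pos ha hb)
  rw [hz', ← hexp]
  field_simp

lemma gammaPDF_lconvolution_gammaPDF_of_neg {z : ℝ} (hz : z < 0) :
    (gammaPDF a r ⋆ₗ gammaPDF b r) z = 0 := by
  refine (lintegral_congr fun x => ?_).trans lintegral_zero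
  rcases lt_or_ge x 0 with hx | hx
  · rw [gammaPDF_of_neg hx, zero_mul]
  · rw [gammaPDF_of_neg (x := -x + z) (by linarith), mul_zero]

lemma gammaPDF_lconvolution_gammaPDF_of_pos (ha : 0 < a) (hb : 0 < b) (hr : 0 < r) {z : ℝ}
    (hz : 0 < z) : (gammaPDF a r ⋆ₗ gammaPDF b r) z = gammaPDF (a + b) r z := by
  have hscale := lintegral_image_eq_lintegral_abs_deriv_mul MeasurableSet.univ
    (fun t _ => (hasDerivAt_const_mul z).hasDerivWithinAt)
    (mul_right_injective₀ hz.ne').injOn fun x => gammaPDF a r x * gammaPDF b r (-x + z)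
  rw [image_univ_of_surjective (mul_left_surjective₀ hz.ne'), Measure.restrict_univ] at hscale
  have hbeta : ∀ t ∉ ({0, 1} : Set ℝ),
      ENNReal.ofReal |z| * (gammaPDF a r (z * t) * gammaPDF b r (-(z * t) + z)) =
        gammaPDF (a + b) r z * betaPDF a b t := by
    intro t ht
    simp only [mem_insert_iff, mem_singleton_iff, not_or] at ht
    rcases lt_or_gt_of_ne ht.1 with ht₀ | ht₀
    · rw [gammaPDF_of_neg (mul_neg_of_pos_of_neg hz ht₀), betaPDF_eq_zero_of_nonpos ht₀.le,
        zero_mul, mul_zero, mul_zero]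
    rcases lt_or_gt_of_ne ht.2 with ht₁ | ht₁
    · rw [abs_of_pos hz, gammaPDF, gammaPDF, gammaPDF, betaPDF, ← ENNReal.ofReal_mul,
        ← ENNReal.ofReal_mul, ← ENNReal.ofReal_mul, show -(z * t) + z = z * (1 - t) by ring,
        mul_gammaPDFReal_mul_gammaPDFReal ha hb hr hz ht₀ ht₁]
      exacts [gammaPDFReal_nonneg (add_pos ha hb) hr z, hz.le, gammaPDFReal_nonneg ha hr _]
    · rw [gammaPDF_of_neg (x := -(z * t) + z) (by nlinarith), betaPDF_eq_zero_of_one_le ht₁.le,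
        mul_zero, mul_zero, mul_zero]
  have hae := ((countable_singleton (1 : ℝ)).insert 0).ae_notMem volume
  rw [lconvolution_def, hscale, lintegral_congr_ae (hae.mono hbeta),
    lintegral_const_mul' _ _ (by exact ENNReal.ofReal_ne_top), lintegral_betaPDF_eq_one ha hb,
    mul_one]

lemma gammaPDF_lconvolution_gammaPDF (ha : 0 < a) (hb : 0 < b) (hr : 0 < r) :
    gammaPDF a r ⋆ₗ gammaPDF b r =ᵐ[volume] gammaPDF (a + b) r := by
  filter_upwards [(countable_singleton (0 : ℝ)).ae_notMem volume] with z hz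
  rcases lt_or_gt_of_ne hz with hneg | hpos
  · rw [gammaPDF_lconvolution_gammaPDF_of_neg hneg, gammaPDF_of_neg hneg]
  · exact gammaPDF_lconvolution_gammaPDF_of_pos ha hb hr hpos

lemma gammaMeasure_conv_gammaMeasure (ha : 0 < a) (hb : 0 < b) (hr : 0 < r) :
    gammaMeasure a r ∗ gammaMeasure b r = gammaMeasure (a + b) r := by
  rw [gammaMeasure, gammaMeasure, conv_withDensity_eq_lconvolution (by fun_prop) (by fun_prop),
    gammaMeasure, withDensity_congr_ae (gammaPDF_lconvolution_gammaPDF ha hb hr)]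

lemma iIndepFun.map_sum_eq_gammaMeasure {ι Ω : Type*} [MeasurableSpace Ω] {P : Measure Ω}
    [IsFiniteMeasure P] {X : ι → Ω → ℝ} (hX : ∀ i, Measurable (X i)) (hind : iIndepFun X P)
    {a : ι → ℝ} (ha : ∀ i, 0 < a i) (hr : 0 < r)
    (hlaw : ∀ i, P.map (X i) = gammaMeasure (a i) r) {s : Finset ι} (hs : s.Nonempty) :
    P.map (∑ i ∈ s, X i) = gammaMeasure (∑ i ∈ s, a i) r := by
  induction hs using Finset.Nonempty.cons_induction with
  | singleton i => simpa using hlaw i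
  | cons i s hi hs ih =>
    have hindep_i := (hind.indepFun_finsetSum_of_notMem hX hi).symm
    rw [Finset.sum_cons, Finset.sum_cons, hindep_i.map_add_eq_map_conv_map (hX i) (by fun_prop),
      hlaw i, ih, gammaMeasure_conv_gammaMeasure (ha i) (Finset.sum_pos (fun j _ => ha j) hs) hr]

end GammaConvolution

section GaussianSquare

variable {v : ℝ≥0}

lemma two_mul_gaussianPDFReal_eq_mul_gammaPDFReal_sq (hv : v ≠ 0) {x : ℝ} (hx : 0 < x) :
    2 * gaussianPDFReal 0 v x = 2 * x * gammaPDFReal (1 / 2) (2 * v)⁻¹ (x ^ 2) := by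
  have hrpow : (x ^ 2) ^ ((1 : ℝ) / 2 - 1) = x⁻¹ := by
    rw [← rpow_natCast x 2, ← rpow_mul hx.le]
    norm_num [rpow_neg_one]
  have hconst : ((2 * v : ℝ)⁻¹) ^ ((1 : ℝ) / 2) / Gamma (1 / 2) = (√(2 * π * v))⁻¹ := by
    rw [Gamma_one_half_eq, ← sqrt_eq_rpow, sqrt_inv, div_eq_mul_inv, ← mul_inv,
      ← sqrt_mul (by positivity)]
    ring_nf
  rw [gammaPDFReal, if_pos (sq_nonneg x), hconst, hrpow, gaussianPDFReal]
  field_simp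
  ring_nf

lemma gaussianReal_map_sq (hv : v ≠ 0) :
    (gaussianReal 0 v).map (· ^ 2) = gammaMeasure (1 / 2) (2 * v)⁻¹ := by
  refine Measure.ext_of_lintegral _ fun g hg => ?_
  rw [lintegral_map hg (by fun_prop), gaussianReal_of_var_ne_zero _ hv, gammaMeasure,
    lintegral_withDensity_eq_lintegral_mul _ (by fun_prop) (g := fun x => g (x ^ 2)) (by fun_prop),
    lintegral_withDensity_eq_lintegral_mul _ (by fun_prop) hg]
  have hsq : (· ^ 2) '' Ioi (0 : ℝ) = Ioi 0 := by
    ext y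
    refine ⟨?_, fun hy => ⟨√y, sqrt_pos.2 hy, sq_sqrt hy.le⟩⟩
    rintro ⟨x, hx : 0 < x, rfl⟩
    exact pow_pos hx 2
  calc ∫⁻ x, gaussianPDF 0 v x * g (x ^ 2)
      = 2 * ∫⁻ x in Ioi 0, gaussianPDF 0 v x * g (x ^ 2) :=
        Function.Even.lintegral_eq_two_mul_setLIntegral_Ioi fun x => by
          simp [gaussianPDF, gaussianPDFReal]
    _ = ∫⁻ x in Ioi 0,
          ENNReal.ofReal |2 * x| * (gammaPDF (1 / 2) (2 * v)⁻¹ (x ^ 2) * g (x ^ 2)) := by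
        rw [← lintegral_const_mul' _ _ ENNReal.ofNat_ne_top]
        refine setLIntegral_congr_fun measurableSet_Ioi fun x (hx : 0 < x) => ?_
        rw [← mul_assoc, ← mul_assoc, gaussianPDF, gammaPDF, abs_of_pos (by positivity),
          ← ENNReal.ofReal_mul (by positivity),
          ← two_mul_gaussianPDFReal_eq_mul_gammaPDFReal_sq hv hx,
          ENNReal.ofReal_mul zero_le_two, ENNReal.ofReal_ofNat]
    _ = ∫⁻ y in Ioi 0, gammaPDF (1 / 2) (2 * v)⁻¹ y * g y := by
        rw [← lintegral_image_eq_lintegral_abs_deriv_mul measurableSet_Ioi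
          (fun x _ => by simpa using (hasDerivAt_pow 2 x).hasDerivWithinAt)
          ((pow_left_strictMonoOn₀ two_ne_zero).injOn.mono fun x (hx : 0 < x) => hx.le)
          fun y => gammaPDF (1 / 2) (2 * v)⁻¹ y * g y, hsq]
    _ = ∫⁻ y, gammaPDF (1 / 2) (2 * v)⁻¹ y * g y := by
        rw [Measure.restrict_congr_set Ioi_ae_eq_Ici]
        refine setLIntegral_eq_of_support_subset fun y hy => mem_Ici.2 <| not_lt.1 fun hneg => ?_
        simp [gammaPDF_of_neg hneg] at hy

end GaussianSquare

end ProbabilityTheory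

/-- The sum of squares of `k` independent standard normals has the chi-squared
distribution with `k` degrees of freedom, i.e. `Gamma(k/2, 1/2)`. -/
theorem sum_sq_std_normal_chi_sq {Ω : Type*} [MeasureSpace Ω] (P : Measure Ω)
    [IsProbabilityMeasure P] (k : ℕ) (hk : 1 ≤ k) (Y : Fin k → Ω → ℝ)
    (hmeas : ∀ i, Measurable (Y i))
    (hindep : iIndepFun Y P)
    (hlaw : ∀ i, P.map (Y i) = gaussianReal 0 1) :
    P.map (fun ω => ∑ i, (Y i ω) ^ 2) = gammaMeasure ((k : ℝ) / 2) (1 / 2) := by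
  have hsq_law : ∀ i, P.map ((· ^ 2) ∘ Y i) = gammaMeasure (1 / 2) (1 / 2) := fun i => by
    rw [← Measure.map_map (by fun_prop) (hmeas i), hlaw i, gaussianReal_map_sq one_ne_zero]
    norm_num
  have : NeZero k := ⟨by omega⟩
  have hsum := (hindep.comp (fun _ x => x ^ 2) fun _ => by fun_prop).map_sum_eq_gammaMeasure
    (fun i => (hmeas i).pow_const 2) (fun _ => one_half_pos) one_half_pos hsq_law
    Finset.univ_nonempty
  convert hsum using 2
  · ext ω
    simp
  · simp only [Finset.sum_const, Finset.card_univ, Fintype.card_fin, nsmul_eq_mul]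
    ring
end
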